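/- Let α, α₁, α₂ ∈ ℝ with α ≠ 0 and α·α₂ < 0. For j ∈ ℕ and t ∈ ℝ define c_j(t) = ∫_{−∞}^{∞} s^j e^{jαt} exp((α₁/(2α)) s² e^{2αt} + (α₂/(4α)) s⁴ e^{4αt}) ds. Then each integral converges, each c_j is differentiable on ℝ, and the moments simultaneously satisfy c_j'(t) = α j c_j(t) + α₁ c_{j+2}(t) + α₂ c_{j+4}(t) and c_j'(t) = −α c_j(t) for all j ∈ ℕ and all t ∈ ℝ. -/

import Mathlib

open MeasureTheory

/-- The deformed moments
`c_j(t) = ∫_{−∞}^{∞} s^j e^{jαt} exp((α₁/(2α)) s² e^{2αt} + (α₂/(4α)) s⁴ e^{4αt}) ds`. -/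
noncomputable def deformedMomentLV (α α₁ α₂ : ℝ) (j : ℕ) (t : ℝ) : ℝ :=
  ∫ s : ℝ,
    s ^ j * Real.exp ((j : ℝ) * α * t) *
      Real.exp (α₁ / (2 * α) * s ^ 2 * Real.exp (2 * α * t)
        + α₂ / (4 * α) * s ^ 4 * Real.exp (4 * α * t))

/-!
Substituting `u = e^{αt} s` turns `c_j(t)` into `e^{-αt} M_j`, where
`M_j = ∫ u^j exp(b u² + c u⁴) du` with `b = α₁/(2α)`, `c = α₂/(4α) < 0`; this gives `c_j' = -α c_j`
at once. Integrating the derivative of `u^{j+1} exp(b u² + c u⁴)` over the line gives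
`(j+1) M_j + 2b M_{j+2} + 4c M_{j+4} = 0`, and multiplying by `α e^{-αt}` turns this into
`α j c_j + α₁ c_{j+2} + α₂ c_{j+4} = -α c_j`.
-/

open Real

noncomputable def quarticMoment (b c : ℝ) (k : ℕ) : ℝ :=
  ∫ s : ℝ, s ^ k * exp (b * s ^ 2 + c * s ^ 4)

section QuarticWeight

variable {b c : ℝ}

lemma quartic_le_sub_sq (hc : c < 0) (s : ℝ) :
    b * s ^ 2 + c * s ^ 4 ≤ (b + 1) ^ 2 / (4 * -c) - s ^ 2 := by
  rw [le_sub_iff_add_le, le_div_iff₀ (by linarith)]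
  nlinarith [sq_nonneg (2 * c * s ^ 2 + (b + 1))]

lemma norm_pow_mul_exp_quartic_le (hc : c < 0) (k : ℕ) (s : ℝ) :
    ‖s ^ k * exp (b * s ^ 2 + c * s ^ 4)‖ ≤
      exp ((b + 1) ^ 2 / (4 * -c) + k ^ 2 / 2) * exp (-(1 / 2) * s ^ 2) := by
  have hpow : |s| ^ k ≤ exp (k * |s|) := by
    rw [exp_nat_mul]
    exact pow_le_pow_left₀ (abs_nonneg s) (by linarith [add_one_le_exp |s|]) k
  rw [norm_mul, norm_pow, norm_eq_abs, norm_of_nonneg (exp_pos _).le, ← exp_add]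
  calc |s| ^ k * exp (b * s ^ 2 + c * s ^ 4)
      ≤ exp (k * |s|) * exp ((b + 1) ^ 2 / (4 * -c) - s ^ 2) := by
        gcongr
        exact quartic_le_sub_sq hc s
    _ ≤ exp ((b + 1) ^ 2 / (4 * -c) + k ^ 2 / 2 + -(1 / 2) * s ^ 2) := by
        rw [← exp_add, exp_le_exp]
        nlinarith [sq_nonneg (|s| - k), sq_abs s]

lemma integrable_pow_mul_exp_quartic (hc : c < 0) (k : ℕ) :
    Integrable fun s : ℝ => s ^ k * exp (b * s ^ 2 + c * s ^ 4) :=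
  ((integrable_exp_neg_mul_sq (by norm_num : (0 : ℝ) < 1 / 2)).const_mul _).mono'
    (by fun_prop) (ae_of_all _ (norm_pow_mul_exp_quartic_le hc k))

lemma hasDerivAt_pow_succ_mul_exp_quartic (b c : ℝ) (j : ℕ) (s : ℝ) :
    HasDerivAt (fun s : ℝ => s ^ (j + 1) * exp (b * s ^ 2 + c * s ^ 4))
      ((j + 1) * (s ^ j * exp (b * s ^ 2 + c * s ^ 4))
        + 2 * b * (s ^ (j + 2) * exp (b * s ^ 2 + c * s ^ 4))
        + 4 * c * (s ^ (j + 4) * exp (b * s ^ 2 + c * s ^ 4))) s := by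
  have hquartic : HasDerivAt (fun s : ℝ => b * s ^ 2 + c * s ^ 4)
      (b * (2 * s) + c * (4 * s ^ 3)) s := by
    simpa using ((hasDerivAt_pow 2 s).const_mul b).fun_add ((hasDerivAt_pow 4 s).const_mul c)
  refine ((hasDerivAt_pow (j + 1) s).fun_mul hquartic.exp).congr_deriv ?_
  push_cast
  ring

theorem quarticMoment_recurrence (hc : c < 0) (j : ℕ) :
    (j + 1) * quarticMoment b c j + 2 * b * quarticMoment b c (j + 2)
      + 4 * c * quarticMoment b c (j + 4) = 0 := by
  have hterm (k : ℕ) (a : ℝ) : Integrable fun s : ℝ => a * (s ^ k * exp (b * s ^ 2 + c * s ^ 4)) :=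
    (integrable_pow_mul_exp_quartic hc k).const_mul a
  have h := integral_eq_zero_of_hasDerivAt_of_integrable
    (hasDerivAt_pow_succ_mul_exp_quartic b c j)
    (((hterm j _).fun_add (hterm _ _)).fun_add (hterm _ _))
    (integrable_pow_mul_exp_quartic hc (j + 1))
  rwa [integral_add ((hterm j _).fun_add (hterm _ _)) (hterm _ _),
    integral_add (hterm j _) (hterm _ _),
    integral_const_mul, integral_const_mul, integral_const_mul] at h

end QuarticWeight

lemma deformedMomentLV_integrand_eq (α α₁ α₂ : ℝ) (j : ℕ) (t s : ℝ) :
    s ^ j * exp ((j : ℝ) * α * t) *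
      exp (α₁ / (2 * α) * s ^ 2 * exp (2 * α * t) + α₂ / (4 * α) * s ^ 4 * exp (4 * α * t))
    = (exp (α * t) * s) ^ j *
      exp (α₁ / (2 * α) * (exp (α * t) * s) ^ 2 + α₂ / (4 * α) * (exp (α * t) * s) ^ 4) := by
  simp only [mul_pow, ← exp_nat_mul, Nat.cast_ofNat]
  ring_nf

theorem integrable_deformedMomentLV_integrand {α α₁ α₂ : ℝ} (hc : α₂ / (4 * α) < 0)
    (j : ℕ) (t : ℝ) :
    Integrable fun s : ℝ => s ^ j * exp ((j : ℝ) * α * t) *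
      exp (α₁ / (2 * α) * s ^ 2 * exp (2 * α * t) + α₂ / (4 * α) * s ^ 4 * exp (4 * α * t)) := by
  simp_rw [deformedMomentLV_integrand_eq]
  exact (integrable_pow_mul_exp_quartic hc j).comp_mul_left' (exp_ne_zero _)

theorem deformedMomentLV_eq_exp_mul_quarticMoment (α α₁ α₂ : ℝ) (j : ℕ) (t : ℝ) :
    deformedMomentLV α α₁ α₂ j t
      = exp (-(α * t)) * quarticMoment (α₁ / (2 * α)) (α₂ / (4 * α)) j := by
  have hscale := Measure.integral_comp_mul_left
    (fun u : ℝ => u ^ j * exp (α₁ / (2 * α) * u ^ 2 + α₂ / (4 * α) * u ^ 4)) (exp (α * t))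
  simp_rw [deformedMomentLV, deformedMomentLV_integrand_eq, hscale, quarticMoment,
    abs_of_pos (inv_pos.2 (exp_pos _)), smul_eq_mul, exp_neg]

theorem hasDerivAt_deformedMomentLV (α α₁ α₂ : ℝ) (j : ℕ) (t : ℝ) :
    HasDerivAt (fun u => deformedMomentLV α α₁ α₂ j u)
      (-α * deformedMomentLV α α₁ α₂ j t) t := by
  simp_rw [deformedMomentLV_eq_exp_mul_quarticMoment]
  exact (((hasDerivAt_id' t).const_mul α).fun_neg.exp.mul_const _).congr_deriv (by ring)

theorem deformedMomentLV_recurrence {α α₁ α₂ : ℝ} (hα : α ≠ 0) (hc : α₂ / (4 * α) < 0)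
    (j : ℕ) (t : ℝ) :
    α * j * deformedMomentLV α α₁ α₂ j t + α₁ * deformedMomentLV α α₁ α₂ (j + 2) t
      + α₂ * deformedMomentLV α α₁ α₂ (j + 4) t = -α * deformedMomentLV α α₁ α₂ j t := by
  have hb : α * (2 * (α₁ / (2 * α))) = α₁ := by field_simp
  have hc' : α * (4 * (α₂ / (4 * α))) = α₂ := by field_simp
  simp only [deformedMomentLV_eq_exp_mul_quarticMoment]
  set M := quarticMoment (α₁ / (2 * α)) (α₂ / (4 * α))
  linear_combination exp (-(α * t)) * (α * quarticMoment_recurrence hc j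
    - M (j + 2) * hb - M (j + 4) * hc')

theorem deformedMomentLV_evolution_general (α α₁ α₂ : ℝ) (hαα₂ : α * α₂ < 0) :
    (∀ (j : ℕ) (t : ℝ), Integrable
      (fun s : ℝ => s ^ j * Real.exp ((j : ℝ) * α * t) *
        Real.exp (α₁ / (2 * α) * s ^ 2 * Real.exp (2 * α * t)
          + α₂ / (4 * α) * s ^ 4 * Real.exp (4 * α * t)))) ∧
    (∀ (j : ℕ) (t : ℝ), HasDerivAt (fun u => deformedMomentLV α α₁ α₂ j u)
      (α * (j : ℝ) * deformedMomentLV α α₁ α₂ j t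
        + α₁ * deformedMomentLV α α₁ α₂ (j + 2) t
        + α₂ * deformedMomentLV α α₁ α₂ (j + 4) t) t) ∧
    (∀ (j : ℕ) (t : ℝ), HasDerivAt (fun u => deformedMomentLV α α₁ α₂ j u)
      (-α * deformedMomentLV α α₁ α₂ j t) t) := by
  have hα : α ≠ 0 := left_ne_zero_of_mul hαα₂.ne
  have hc : α₂ / (4 * α) < 0 := by
    rw [show α₂ / (4 * α) = α * α₂ / (4 * α ^ 2) by field_simp]
    exact div_neg_of_neg_of_pos hαα₂ (by positivity)
  refine ⟨integrable_deformedMomentLV_integrand hc, fun j t => ?_,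
    hasDerivAt_deformedMomentLV α α₁ α₂⟩
  rw [deformedMomentLV_recurrence hα hc]
  exact hasDerivAt_deformedMomentLV α α₁ α₂ j t

/-- The moments simultaneously satisfy the nonisospectral evolution
`c_j' = α j c_j + α₁ c_{j+2} + α₂ c_{j+4}` and the stationarity relation `c_j' = −α c_j`. -/
theorem deformedMomentLV_evolution (α α₁ α₂ : ℝ) (hα : α ≠ 0) (hαα₂ : α * α₂ < 0) :
    (∀ (j : ℕ) (t : ℝ), Integrable
      (fun s : ℝ => s ^ j * Real.exp ((j : ℝ) * α * t) *
        Real.exp (α₁ / (2 * α) * s ^ 2 * Real.exp (2 * α * t)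
          + α₂ / (4 * α) * s ^ 4 * Real.exp (4 * α * t)))) ∧
    (∀ (j : ℕ) (t : ℝ), HasDerivAt (fun u => deformedMomentLV α α₁ α₂ j u)
      (α * (j : ℝ) * deformedMomentLV α α₁ α₂ j t
        + α₁ * deformedMomentLV α α₁ α₂ (j + 2) t
        + α₂ * deformedMomentLV α α₁ α₂ (j + 4) t) t) ∧
    (∀ (j : ℕ) (t : ℝ), HasDerivAt (fun u => deformedMomentLV α α₁ α₂ j u)
      (-α * deformedMomentLV α α₁ α₂ j t) t) :=
  deformedMomentLV_evolution_general α α₁ α₂ hαα₂
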